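/- Let 0 < η < 1/e and let p ≥ 1 be a real number. There exists a constant C > 0 such that for all x > 0: x^{2p}·κ̃₂(x) ≤ C·ρ_η(x^{2p}). -/

import Mathlib

/-! With `L = log (1/η) > 1` take `C = L / (L - 1)`. Below `η` the weight `κ̃₂(x) = log (1/x)` is
at most `log (1/x^{2p})` because `x^{2p} ≤ x`, so `x^{2p} κ̃₂(x) ≤ ρ_η(x^{2p})`. Above `η` the
quadratic branch of `κ̃₂` is at most `L`, and `y L ≤ C ρ_η(y)` holds for every `y > 0`: below `η`
since `log (1/y) ≥ L`, above `η` since `ρ_η(y) = (L - 1) y + η` there. -/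

open Real

/-- `κ̃₂(x) = log(1/x)` for `0 < x ≤ η`, and for `x > η`,
`κ̃₂(x) = (((log(1/η))^{1/2} − (1/2)(log(1/η))^{−1/2})·x + (1/2)(log(1/η))^{−1/2}·η)² / x²`. -/
noncomputable def kappa2 (η x : ℝ) : ℝ :=
  if x ≤ η then Real.log (1 / x)
  else ((Real.sqrt (Real.log (1 / η)) - (1 / 2) * (Real.sqrt (Real.log (1 / η)))⁻¹) * x
        + (1 / 2) * (Real.sqrt (Real.log (1 / η)))⁻¹ * η) ^ 2 / x ^ 2

/-- `ρ_η(x) = x·log(1/x)` for `0 < x ≤ η`, `ρ_η(0) = 0`, and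
`ρ_η(x) = η·log(1/η) + (log(1/η) − 1)·(x − η)` for `x > η`. -/
noncomputable def rhoEta (η x : ℝ) : ℝ :=
  if x ≤ 0 then 0
  else if x ≤ η then x * Real.log (1 / x)
  else η * Real.log (1 / η) + (Real.log (1 / η) - 1) * (x - η)

lemma one_lt_log_one_div {η : ℝ} (hη₀ : 0 < η) (hη₁ : η < 1 / exp 1) : 1 < log (1 / η) := by
  rw [lt_log_iff_exp_lt (by positivity), lt_div_iff₀ hη₀, mul_comm, ← lt_div_iff₀ (exp_pos 1)]
  exact hη₁

lemma log_one_div_le_log_one_div {x y : ℝ} (hy : 0 < y) (hyx : y ≤ x) :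
    log (1 / x) ≤ log (1 / y) := by
  simp only [one_div, log_inv, neg_le_neg_iff]
  exact log_le_log hy hyx

lemma one_le_div_sub_one {a : ℝ} (ha : 1 < a) : 1 ≤ a / (a - 1) := by
  rw [le_div_iff₀ (by linarith)]
  linarith

section

variable {η : ℝ}

lemma kappa2_le_log_one_div_of_lt {x : ℝ} (hη₀ : 0 < η) (hL : 1 / 2 ≤ log (1 / η)) (hηx : η < x) :
    kappa2 η x ≤ log (1 / η) := by
  set s := sqrt (log (1 / η))
  have hs : s ^ 2 = log (1 / η) := sq_sqrt (by linarith)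
  have hs₀ : 0 < s := sqrt_pos.2 (by linarith)
  have hx : 0 < x := hη₀.trans hηx
  -- the base of the square is `s x - (x - η) / (2 s)`, which lies in `[0, s x]`
  have hbase : (s - 1 / 2 * s⁻¹) * x + 1 / 2 * s⁻¹ * η = s * x - (x - η) / (2 * s) := by
    field_simp
    ring
  have hbase₀ : 0 ≤ s * x - (x - η) / (2 * s) := by
    rw [sub_nonneg, div_le_iff₀ (by positivity)]
    nlinarith
  have hbase₁ : s * x - (x - η) / (2 * s) ≤ s * x :=
    sub_le_self _ (div_nonneg (by linarith) (by positivity))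
  rw [kappa2, if_neg hηx.not_ge, hbase, div_le_iff₀ (by positivity), ← hs, ← mul_pow]
  exact pow_le_pow_left₀ hbase₀ hbase₁ 2

lemma rhoEta_nonneg (hη₀ : 0 < η) (hL : 1 ≤ log (1 / η)) (y : ℝ) : 0 ≤ rhoEta η y := by
  unfold rhoEta
  split_ifs with hy₀ hyη
  · exact le_rfl
  · have := log_one_div_le_log_one_div (not_le.1 hy₀) hyη
    exact mul_nonneg (not_le.1 hy₀).le (by linarith)
  · exact add_nonneg (mul_nonneg hη₀.le (by linarith))
      (mul_nonneg (by linarith) (by linarith [not_le.1 hyη]))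

lemma mul_log_one_div_le_rhoEta {x y : ℝ} (hy : 0 < y) (hyx : y ≤ x) (hxη : x ≤ η) :
    y * log (1 / x) ≤ rhoEta η y := by
  rw [rhoEta, if_neg hy.not_ge, if_pos (hyx.trans hxη)]
  exact mul_le_mul_of_nonneg_left (log_one_div_le_log_one_div hy hyx) hy.le

lemma mul_log_one_div_eta_le_rhoEta (hη₀ : 0 < η) (hL : 1 < log (1 / η)) {y : ℝ} (hy : 0 < y) :
    y * log (1 / η) ≤ log (1 / η) / (log (1 / η) - 1) * rhoEta η y := by
  set L := log (1 / η)
  by_cases hyη : y ≤ η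
  · calc y * L ≤ y * log (1 / y) :=
          mul_le_mul_of_nonneg_left (log_one_div_le_log_one_div hy hyη) hy.le
      _ = rhoEta η y := by rw [rhoEta, if_neg hy.not_ge, if_pos hyη]
      _ ≤ L / (L - 1) * rhoEta η y :=
          le_mul_of_one_le_left (rhoEta_nonneg hη₀ hL.le y) (one_le_div_sub_one hL)
  · rw [rhoEta, if_neg hy.not_ge, if_neg hyη, div_mul_eq_mul_div, le_div_iff₀ (by linarith)]
    nlinarith

end

/-- For `0 < η < 1/e` and real `p ≥ 1`, there is `C > 0` with
`x^{2p}·κ̃₂(x) ≤ C·ρ_η(x^{2p})` for all `x > 0`. -/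
theorem kappa2_le_rhoEta (η p : ℝ) (hη₀ : 0 < η) (hη₁ : η < 1 / Real.exp 1)
    (hp : 1 ≤ p) :
    ∃ C : ℝ, 0 < C ∧ ∀ x : ℝ, 0 < x →
      x ^ (2 * p) * kappa2 η x ≤ C * rhoEta η (x ^ (2 * p)) := by
  have hL := one_lt_log_one_div hη₀ hη₁
  refine ⟨log (1 / η) / (log (1 / η) - 1), div_pos (by linarith) (by linarith), fun x hx => ?_⟩
  have hy : 0 < x ^ (2 * p) := rpow_pos_of_pos hx _
  by_cases hxη : x ≤ η
  · have he : 1 / exp 1 < 1 := (div_lt_one (exp_pos 1)).2 (one_lt_exp_iff.2 one_pos)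
    have hyx : x ^ (2 * p) ≤ x := rpow_le_self_of_le_one hx.le (by linarith) (by linarith)
    rw [kappa2, if_pos hxη]
    exact (mul_log_one_div_le_rhoEta hy hyx hxη).trans
      (le_mul_of_one_le_left (rhoEta_nonneg hη₀ hL.le _) (one_le_div_sub_one hL))
  · calc x ^ (2 * p) * kappa2 η x ≤ x ^ (2 * p) * log (1 / η) :=
          mul_le_mul_of_nonneg_left
            (kappa2_le_log_one_div_of_lt hη₀ (by linarith) (not_le.1 hxη)) hy.le
      _ ≤ _ := mul_log_one_div_eta_le_rhoEta hη₀ hL hy
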